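/- For all positive integers d and a, the set S₂ = {0, d, 2d, 4d, 5d, 5d+a} satisfies |S₂+S₂| ≤ |S₂-S₂| (i.e., S₂ is not sum-dominant). -/
import Mathlib
set_option maxHeartbeats 3200000
open Finset
open scoped Pointwise

private lemma key6 {S T V B : Finset ℤ} (hA : S ⊆ T) (hB : V ⊆ B) {m n : ℕ}
    (hT : T.card = m) (hV : V.card = n) (h : m ≤ n) : S.card ≤ B.card := by
  calc S.card ≤ T.card := Finset.card_le_card hA
    _ = m := hT
    _ ≤ n := h
    _ = V.card := hV.symm
    _ ≤ B.card := Finset.card_le_card hB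

theorem stmt_6 (d a : ℤ) (hd : 0 < d) (ha : 0 < a) :
    ((({0, d, 2*d, 4*d, 5*d, 5*d+a} : Finset ℤ)) + {0, d, 2*d, 4*d, 5*d, 5*d+a}).card ≤ ((({0, d, 2*d, 4*d, 5*d, 5*d+a} : Finset ℤ)) - {0, d, 2*d, 4*d, 5*d, 5*d+a}).card := by
  by_cases h1 : a = d
  · apply key6 (T := ({0, d, 2*d, 3*d, 4*d, 5*d, 6*d, 7*d, 8*d, 9*d, 10*d, 11*d, 12*d} : Finset ℤ))
      (V := ({0-0, d-0, 0-(d), 2*d-0, 0-(2*d), 4*d-(d), d-(4*d), 4*d-0, 0-(4*d), 5*d-0, 0-(5*d), 5*d+a-0, 0-(5*d+a)} : Finset ℤ)) (m := 13) (n := 13)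
    · rw [Finset.add_subset_iff]
      intro x hx y hy
      simp only [Finset.mem_insert, Finset.mem_singleton] at hx hy ⊢
      rcases hx with rfl|rfl|rfl|rfl|rfl|rfl <;> rcases hy with rfl|rfl|rfl|rfl|rfl|rfl <;> omega
    · simp only [Finset.insert_subset_iff, Finset.singleton_subset_iff]
      refine ⟨?_,?_,?_,?_,?_,?_,?_,?_,?_,?_,?_,?_,?_⟩ <;> exact Finset.sub_mem_sub (by simp) (by simp)
    · repeat rw [Finset.card_insert_of_notMem (by simp only [Finset.mem_insert, Finset.mem_singleton]; omega)]
      simp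
    · repeat rw [Finset.card_insert_of_notMem (by simp only [Finset.mem_insert, Finset.mem_singleton]; omega)]
      simp
    · omega
  by_cases h2 : a = 2*d
  · apply key6 (T := ({0, d, 2*d, 3*d, 4*d, 5*d, 6*d, 7*d, 8*d, 9*d, 10*d, 11*d, 12*d, 14*d} : Finset ℤ))
      (V := ({0-0, d-0, 0-(d), 2*d-0, 0-(2*d), 4*d-(d), d-(4*d), 4*d-0, 0-(4*d), 5*d-0, 0-(5*d), 5*d+a-(d), d-(5*d+a), 5*d+a-0, 0-(5*d+a)} : Finset ℤ)) (m := 14) (n := 15)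
    · rw [Finset.add_subset_iff]
      intro x hx y hy
      simp only [Finset.mem_insert, Finset.mem_singleton] at hx hy ⊢
      rcases hx with rfl|rfl|rfl|rfl|rfl|rfl <;> rcases hy with rfl|rfl|rfl|rfl|rfl|rfl <;> omega
    · simp only [Finset.insert_subset_iff, Finset.singleton_subset_iff]
      refine ⟨?_,?_,?_,?_,?_,?_,?_,?_,?_,?_,?_,?_,?_,?_,?_⟩ <;> exact Finset.sub_mem_sub (by simp) (by simp)
    · repeat rw [Finset.card_insert_of_notMem (by simp only [Finset.mem_insert, Finset.mem_singleton]; omega)]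
      simp
    · repeat rw [Finset.card_insert_of_notMem (by simp only [Finset.mem_insert, Finset.mem_singleton]; omega)]
      simp
    · omega
  by_cases h3 : a = 3*d
  · apply key6 (T := ({0, d, 2*d, 3*d, 4*d, 5*d, 6*d, 7*d, 8*d, 9*d, 10*d, 12*d, 13*d, 16*d} : Finset ℤ))
      (V := ({0-0, d-0, 0-(d), 2*d-0, 0-(2*d), 4*d-(d), d-(4*d), 4*d-0, 0-(4*d), 5*d-0, 0-(5*d), 5*d+a-(2*d), 2*d-(5*d+a), 5*d+a-(d), d-(5*d+a), 5*d+a-0, 0-(5*d+a)} : Finset ℤ)) (m := 14) (n := 17)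
    · rw [Finset.add_subset_iff]
      intro x hx y hy
      simp only [Finset.mem_insert, Finset.mem_singleton] at hx hy ⊢
      rcases hx with rfl|rfl|rfl|rfl|rfl|rfl <;> rcases hy with rfl|rfl|rfl|rfl|rfl|rfl <;> omega
    · simp only [Finset.insert_subset_iff, Finset.singleton_subset_iff]
      refine ⟨?_,?_,?_,?_,?_,?_,?_,?_,?_,?_,?_,?_,?_,?_,?_,?_,?_⟩ <;> exact Finset.sub_mem_sub (by simp) (by simp)
    · repeat rw [Finset.card_insert_of_notMem (by simp only [Finset.mem_insert, Finset.mem_singleton]; omega)]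
      simp
    · repeat rw [Finset.card_insert_of_notMem (by simp only [Finset.mem_insert, Finset.mem_singleton]; omega)]
      simp
    · omega
  by_cases h4 : a = 4*d
  · apply key6 (T := ({0, d, 2*d, 3*d, 4*d, 5*d, 6*d, 7*d, 8*d, 9*d, 10*d, 11*d, 13*d, 14*d, 18*d} : Finset ℤ))
      (V := ({0-0, d-0, 0-(d), 2*d-0, 0-(2*d), 4*d-(d), d-(4*d), 4*d-0, 0-(4*d), 5*d-0, 0-(5*d), 5*d+a-(2*d), 2*d-(5*d+a), 5*d+a-(d), d-(5*d+a), 5*d+a-0, 0-(5*d+a)} : Finset ℤ)) (m := 15) (n := 17)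
    · rw [Finset.add_subset_iff]
      intro x hx y hy
      simp only [Finset.mem_insert, Finset.mem_singleton] at hx hy ⊢
      rcases hx with rfl|rfl|rfl|rfl|rfl|rfl <;> rcases hy with rfl|rfl|rfl|rfl|rfl|rfl <;> omega
    · simp only [Finset.insert_subset_iff, Finset.singleton_subset_iff]
      refine ⟨?_,?_,?_,?_,?_,?_,?_,?_,?_,?_,?_,?_,?_,?_,?_,?_,?_⟩ <;> exact Finset.sub_mem_sub (by simp) (by simp)
    · repeat rw [Finset.card_insert_of_notMem (by simp only [Finset.mem_insert, Finset.mem_singleton]; omega)]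
      simp
    · repeat rw [Finset.card_insert_of_notMem (by simp only [Finset.mem_insert, Finset.mem_singleton]; omega)]
      simp
    · omega
  by_cases h5 : a = 5*d
  · apply key6 (T := ({0, d, 2*d, 3*d, 4*d, 5*d, 6*d, 7*d, 8*d, 9*d, 10*d, 11*d, 12*d, 14*d, 15*d, 20*d} : Finset ℤ))
      (V := ({0-0, d-0, 0-(d), 2*d-0, 0-(2*d), 4*d-(d), d-(4*d), 4*d-0, 0-(4*d), 5*d-0, 0-(5*d), 5*d+a-(4*d), 4*d-(5*d+a), 5*d+a-(2*d), 2*d-(5*d+a), 5*d+a-(d), d-(5*d+a), 5*d+a-0, 0-(5*d+a)} : Finset ℤ)) (m := 16) (n := 19)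
    · rw [Finset.add_subset_iff]
      intro x hx y hy
      simp only [Finset.mem_insert, Finset.mem_singleton] at hx hy ⊢
      rcases hx with rfl|rfl|rfl|rfl|rfl|rfl <;> rcases hy with rfl|rfl|rfl|rfl|rfl|rfl <;> omega
    · simp only [Finset.insert_subset_iff, Finset.singleton_subset_iff]
      refine ⟨?_,?_,?_,?_,?_,?_,?_,?_,?_,?_,?_,?_,?_,?_,?_,?_,?_,?_,?_⟩ <;> exact Finset.sub_mem_sub (by simp) (by simp)
    · repeat rw [Finset.card_insert_of_notMem (by simp only [Finset.mem_insert, Finset.mem_singleton]; omega)]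
      simp
    · repeat rw [Finset.card_insert_of_notMem (by simp only [Finset.mem_insert, Finset.mem_singleton]; omega)]
      simp
    · omega
  · apply key6 (T := ({0, d, 2*d, 3*d, 4*d, 5*d, 6*d, 7*d, 8*d, 9*d, 10*d, 5*d+a, 6*d+a, 7*d+a, 9*d+a, 10*d+a, 10*d+2*a} : Finset ℤ))
      (V := ({0-0, d-0, 0-(d), 2*d-0, 0-(2*d), 4*d-(d), d-(4*d), 4*d-0, 0-(4*d), 5*d-0, 0-(5*d), (5*d+a)-(5*d), 5*d-(5*d+a), (5*d+a)-(4*d), 4*d-(5*d+a), (5*d+a)-(2*d), 2*d-(5*d+a), (5*d+a)-(d), d-(5*d+a), (5*d+a)-0, 0-(5*d+a)} : Finset ℤ)) (m := 17) (n := 21)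
    · rw [Finset.add_subset_iff]
      intro x hx y hy
      simp only [Finset.mem_insert, Finset.mem_singleton] at hx hy ⊢
      rcases hx with rfl|rfl|rfl|rfl|rfl|rfl <;> rcases hy with rfl|rfl|rfl|rfl|rfl|rfl <;> omega
    · simp only [Finset.insert_subset_iff, Finset.singleton_subset_iff]
      refine ⟨?_,?_,?_,?_,?_,?_,?_,?_,?_,?_,?_,?_,?_,?_,?_,?_,?_,?_,?_,?_,?_⟩ <;> exact Finset.sub_mem_sub (by simp) (by simp)
    · repeat rw [Finset.card_insert_of_notMem (by simp only [Finset.mem_insert, Finset.mem_singleton]; omega)]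
      simp
    · repeat rw [Finset.card_insert_of_notMem (by simp only [Finset.mem_insert, Finset.mem_singleton]; omega)]
      simp
    · omega
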